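/- arXiv:1901.01469 — 2 statements merged into one kernel-verified Lean document; each statement's English description precedes it below -/
import Mathlib

section
/- Let (x̄,λ̄) be a solution of the variational system Ψ(x,λ) = 0, λ ∈ ∂θ(Φ(x)), and set z̄ := Φ(x̄). Then the following are equivalent: (i) Λ(x̄) = {λ̄}; (ii) the multiplier map M_{x̄} is calm at ((0,0),λ̄) and Λ(x̄) = {λ̄}; (iii) M_{x̄} is isolatedly calm at ((0,0),λ̄); (iv) the dual qualification condition D(∂θ)(z̄,λ̄)(0) ∩ ker ∇Φ(x̄)* = {0} holds. -/
open Filter Topology Metric Set Pointwise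
open scoped RealInnerProductSpace

noncomputable section

/-- Euclidean space ℝ^k. -/
abbrev Evec (k : ℕ) : Type := EuclideanSpace ℝ (Fin k)

/-- The Bouligand tangent cone to `Ω` at `z`: limits of `α_k (z_k - z)` with
`z_k → z` in `Ω` and `α_k ≥ 0`. -/
def bTangentCone {F : Type*} [NormedAddCommGroup F] [NormedSpace ℝ F]
    (Ω : Set F) (z : F) : Set F :=
  {w | ∃ (zs : ℕ → F) (a : ℕ → ℝ), (∀ k, zs k ∈ Ω) ∧ (∀ k, 0 ≤ a k) ∧
    Tendsto zs atTop (𝓝 z) ∧ Tendsto (fun k => a k • (zs k - z)) atTop (𝓝 w)}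

/-- Graph of a set-valued mapping. -/
def svGraph {A B : Type*} (F : A → Set B) : Set (A × B) := {p | p.2 ∈ F p.1}

/-- Graphical derivative of a set-valued mapping at `(z, w)` in direction `u`. -/
def gDeriv {A B : Type*} [NormedAddCommGroup A] [NormedSpace ℝ A]
    [NormedAddCommGroup B] [NormedSpace ℝ B]
    (F : A → Set B) (z : A) (w : B) (u : A) : Set B :=
  {v | (u, v) ∈ bTangentCone (svGraph F) (z, w)}

/-- A convex polyhedral set: a finite intersection of closed half-spaces. -/
def IsPolyhedral {k : ℕ} (Y : Set (Evec k)) : Prop :=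
  ∃ (p : ℕ) (b : Fin p → Evec k) (c : Fin p → ℝ), Y = {y | ∀ i, ⟪b i, y⟫ ≤ c i}

/-- The piecewise linear-quadratic penalty θ_{Y,B}. -/
def thetaY {k : ℕ} (Y : Set (Evec k)) (B : Evec k →L[ℝ] Evec k) (u : Evec k) : EReal :=
  ⨆ y ∈ Y, ((⟪y, u⟫ - (1 / 2) * ⟪y, B y⟫ : ℝ) : EReal)

/-- Subdifferential of convex analysis of an extended-real-valued function. -/
def subdiff {k : ℕ} (θ : Evec k → EReal) (z : Evec k) : Set (Evec k) :=
  {v | ∀ u, θ z + ((⟪v, u - z⟫ : ℝ) : EReal) ≤ θ u}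

/-- Polar cone. -/
def polarCone {k : ℕ} (K : Set (Evec k)) : Set (Evec k) :=
  {v | ∀ w ∈ K, ⟪v, w⟫ ≤ 0}

/-- Normal cone of convex analysis. -/
def convNormalCone {k : ℕ} (Ω : Set (Evec k)) (z : Evec k) : Set (Evec k) :=
  {v | ∀ w ∈ Ω, ⟪v, w - z⟫ ≤ 0}

/-- The critical cone K = T_Y(lmo) ∩ {zo - Blmo}^⊥. -/
def critCone {k : ℕ} (Y : Set (Evec k)) (B : Evec k →L[ℝ] Evec k)
    (zo lmo : Evec k) : Set (Evec k) :=
  bTangentCone Y lmo ∩ {w | ⟪zo - B lmo, w⟫ = 0}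

/-- Calmness of a set-valued mapping at a graph point. -/
def Calm {A B : Type*} [NormedAddCommGroup A] [NormedAddCommGroup B]
    (F : A → Set B) (zo : A) (wo : B) : Prop :=
  ∃ ℓ : ℝ, 0 ≤ ℓ ∧ ∃ U ∈ 𝓝 zo, ∃ V ∈ 𝓝 wo,
    ∀ z ∈ U, ∀ w ∈ F z ∩ V, ∃ w' ∈ F zo, ‖w - w'‖ ≤ ℓ * ‖z - zo‖

/-- Isolated calmness of a set-valued mapping at a graph point. -/
def IsolCalm {A B : Type*} [NormedAddCommGroup A] [NormedAddCommGroup B]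
    (F : A → Set B) (zo : A) (wo : B) : Prop :=
  ∃ ℓ : ℝ, 0 ≤ ℓ ∧ ∃ U ∈ 𝓝 zo, ∃ V ∈ 𝓝 wo,
    ∀ z ∈ U, ∀ w ∈ F z ∩ V, ‖w - wo‖ ≤ ℓ * ‖z - zo‖

/-- Robust isolated calmness of a set-valued mapping at a graph point. -/
def RobIsolCalm {A B : Type*} [NormedAddCommGroup A] [NormedAddCommGroup B]
    (F : A → Set B) (zo : A) (wo : B) : Prop :=
  ∃ ℓ : ℝ, 0 ≤ ℓ ∧ ∃ U ∈ 𝓝 zo, ∃ V ∈ 𝓝 wo,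
    (∀ z ∈ U, ∀ w ∈ F z ∩ V, ‖w - wo‖ ≤ ℓ * ‖z - zo‖) ∧
    ∀ z ∈ U, (F z ∩ V).Nonempty

/-- Lipschitz-like (Aubin) property of a set-valued mapping around a graph point. -/
def LipLike {A B : Type*} [NormedAddCommGroup A] [NormedAddCommGroup B]
    (F : A → Set B) (zo : A) (wo : B) : Prop :=
  ∃ ℓ : ℝ, 0 ≤ ℓ ∧ ∃ U ∈ 𝓝 zo, ∃ V ∈ 𝓝 wo,
    ∀ z ∈ U, ∀ z' ∈ U, ∀ w ∈ F z' ∩ V, ∃ w' ∈ F z, ‖w - w'‖ ≤ ℓ * ‖z' - z‖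

/-! ### The general variational system -/

/-- Ψ(x,λ) = f(x) + ∇Φ(x)*λ. -/
def Psi {n m : ℕ} (f : Evec n → Evec n) (Φ : Evec n → Evec m)
    (x : Evec n) (lam : Evec m) : Evec n :=
  f x + ContinuousLinearMap.adjoint (fderiv ℝ Φ x) lam

/-- Lagrange multipliers Λ(xo) of the variational system. -/
def LagMult {n m : ℕ} (Y : Set (Evec m)) (B : Evec m →L[ℝ] Evec m)
    (f : Evec n → Evec n) (Φ : Evec n → Evec m) (xo : Evec n) : Set (Evec m) :=
  {lam | Psi f Φ xo lam = 0 ∧ lam ∈ subdiff (thetaY Y B) (Φ xo)}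

/-- Solution map of the canonically perturbed variational system. -/
def SolMap {n m : ℕ} (Y : Set (Evec m)) (B : Evec m →L[ℝ] Evec m)
    (f : Evec n → Evec n) (Φ : Evec n → Evec m) :
    Evec n × Evec m → Set (Evec n × Evec m) :=
  fun p => {q | Psi f Φ q.1 q.2 = p.1 ∧ q.2 ∈ subdiff (thetaY Y B) (Φ q.1 + p.2)}

/-- Multiplier map associated with xo. -/
def MultMap {n m : ℕ} (Y : Set (Evec m)) (B : Evec m →L[ℝ] Evec m)
    (f : Evec n → Evec n) (Φ : Evec n → Evec m) (xo : Evec n) :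
    Evec n × Evec m → Set (Evec m) :=
  fun p => {lam | Psi f Φ xo lam = p.1 ∧ lam ∈ subdiff (thetaY Y B) (Φ xo + p.2)}

/-- lmo is a critical Lagrange multiplier for the variational system. -/
def IsCriticalMult {n m : ℕ} (Y : Set (Evec m)) (B : Evec m →L[ℝ] Evec m)
    (f : Evec n → Evec n) (Φ : Evec n → Evec m) (xo : Evec n) (lmo : Evec m) : Prop :=
  ∃ ξ : Evec n, ξ ≠ 0 ∧
    ∃ η ∈ gDeriv (subdiff (thetaY Y B)) (Φ xo) lmo (fderiv ℝ Φ xo ξ),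
      fderiv ℝ (fun x => Psi f Φ x lmo) xo ξ +
        ContinuousLinearMap.adjoint (fderiv ℝ Φ xo) η = 0

/-- lmo is a noncritical Lagrange multiplier for the variational system. -/
def IsNoncriticalMult {n m : ℕ} (Y : Set (Evec m)) (B : Evec m →L[ℝ] Evec m)
    (f : Evec n → Evec n) (Φ : Evec n → Evec m) (xo : Evec n) (lmo : Evec m) : Prop :=
  ∀ ξ : Evec n, ∀ η ∈ gDeriv (subdiff (thetaY Y B)) (Φ xo) lmo (fderiv ℝ Φ xo ξ),
    fderiv ℝ (fun x => Psi f Φ x lmo) xo ξ +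
      ContinuousLinearMap.adjoint (fderiv ℝ Φ xo) η = 0 → ξ = 0

/-- `u` is the proximal point of `θ` at `z`. -/
def IsProxPt {k : ℕ} (θ : Evec k → EReal) (z u : Evec k) : Prop :=
  ∀ w, θ u + ((1 / 2 * ‖z - u‖ ^ 2 : ℝ) : EReal) ≤ θ w + ((1 / 2 * ‖z - w‖ ^ 2 : ℝ) : EReal)

/-! ### ENLP -/

/-- The Lagrangian of the ENLP. -/
def Lag {n m : ℕ} (B : Evec m →L[ℝ] Evec m) (φ₀ : Evec n → ℝ) (Φ : Evec n → Evec m)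
    (x : Evec n) (lam : Evec m) : ℝ :=
  φ₀ x + ⟪Φ x, lam⟫ - (1 / 2) * ⟪lam, B lam⟫

/-- The essential objective φ = φ₀ + θ∘Φ of the ENLP. -/
def enlpPhi {n m : ℕ} (Y : Set (Evec m)) (B : Evec m →L[ℝ] Evec m)
    (φ₀ : Evec n → ℝ) (Φ : Evec n → Evec m) (x : Evec n) : EReal :=
  ((φ₀ x : ℝ) : EReal) + thetaY Y B (Φ x)

/-- Lagrange multipliers of the ENLP KKT system. -/
def LagMultCom {n m : ℕ} (Y : Set (Evec m)) (B : Evec m →L[ℝ] Evec m)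
    (φ₀ : Evec n → ℝ) (Φ : Evec n → Evec m) (xo : Evec n) : Set (Evec m) :=
  {lam | gradient (fun x => Lag B φ₀ Φ x lam) xo = 0 ∧
    lam ∈ subdiff (thetaY Y B) (Φ xo)}

/-- Solution map of the canonically perturbed KKT system of the ENLP. -/
def SKKT {n m : ℕ} (Y : Set (Evec m)) (B : Evec m →L[ℝ] Evec m)
    (φ₀ : Evec n → ℝ) (Φ : Evec n → Evec m) :
    Evec n × Evec m → Set (Evec n × Evec m) :=
  fun p => {q | gradient (fun x => Lag B φ₀ Φ x q.2) q.1 = p.1 ∧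
    q.2 ∈ subdiff (thetaY Y B) (Φ q.1 + p.2)}

/-- The Hessian ∇²_{xx}L(xo,lmo) as a continuous linear map. -/
def hessL {n m : ℕ} (B : Evec m →L[ℝ] Evec m) (φ₀ : Evec n → ℝ) (Φ : Evec n → Evec m)
    (xo : Evec n) (lmo : Evec m) : Evec n →L[ℝ] Evec n :=
  fderiv ℝ (fun x => gradient (fun x' => Lag B φ₀ Φ x' lmo) x) xo

/-- lmo is a noncritical multiplier of the KKT system of the ENLP. -/
def IsNoncriticalENLP {n m : ℕ} (Y : Set (Evec m)) (B : Evec m →L[ℝ] Evec m)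
    (φ₀ : Evec n → ℝ) (Φ : Evec n → Evec m) (xo : Evec n) (lmo : Evec m) : Prop :=
  ∀ ξ : Evec n, ∀ η ∈ gDeriv (subdiff (thetaY Y B)) (Φ xo) lmo (fderiv ℝ Φ xo ξ),
    hessL B φ₀ Φ xo lmo ξ + ContinuousLinearMap.adjoint (fderiv ℝ Φ xo) η = 0 → ξ = 0

/-- The second-order sufficient condition for the ENLP at (xo,lmo). -/
def SOSC {n m : ℕ} (Y : Set (Evec m)) (B : Evec m →L[ℝ] Evec m)
    (φ₀ : Evec n → ℝ) (Φ : Evec n → Evec m) (xo : Evec n) (lmo : Evec m) : Prop :=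
  ∀ w : Evec n, w ≠ 0 →
    fderiv ℝ Φ xo w ∈ polarCone (critCone Y B (Φ xo) lmo) + Set.range (⇑B) →
    0 < ((⟪hessL B φ₀ Φ xo lmo w, w⟫ : ℝ) : EReal) +
      2 * thetaY (critCone Y B (Φ xo) lmo) B (fderiv ℝ Φ xo w)

/-- xo is a local optimal solution of the ENLP. -/
def IsLocalOptENLP {n m : ℕ} (Y : Set (Evec m)) (B : Evec m →L[ℝ] Evec m)
    (φ₀ : Evec n → ℝ) (Φ : Evec n → Evec m) (xo : Evec n) : Prop :=
  ∃ ε > (0 : ℝ), ∀ x ∈ Metric.closedBall xo ε,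
    enlpPhi Y B φ₀ Φ xo ≤ enlpPhi Y B φ₀ Φ x

/-- The second subderivative d²φ(xo,vo)(wo). -/
def secondSubderiv {k : ℕ} (φ : Evec k → EReal) (xo vo wo : Evec k) : EReal :=
  Filter.liminf
    (fun p : ℝ × Evec k =>
      ((2 / p.1 ^ 2 : ℝ) : EReal) *
        (φ (xo + p.1 • p.2) - φ xo - ((p.1 * ⟪vo, p.2⟫ : ℝ) : EReal)))
    ((𝓝[>] (0 : ℝ)) ×ˢ 𝓝 wo)

/-- The perturbed objective of the ENLP. -/
def pObj {n m : ℕ} (Y : Set (Evec m)) (B : Evec m →L[ℝ] Evec m)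
    (φ₀ : Evec n → ℝ) (Φ : Evec n → Evec m) (p : Evec n × Evec m) (x : Evec n) : EReal :=
  ((φ₀ x - ⟪p.1, x⟫ : ℝ) : EReal) + thetaY Y B (Φ x + p.2)

/-- xo is a fully stable local optimal solution of the ENLP. -/
def FullyStable {n m : ℕ} (Y : Set (Evec m)) (B : Evec m →L[ℝ] Evec m)
    (φ₀ : Evec n → ℝ) (Φ : Evec n → Evec m) (xo : Evec n) : Prop :=
  ∃ γ > (0 : ℝ), ∃ U ∈ 𝓝 (0 : Evec n), ∃ W ∈ 𝓝 (0 : Evec m),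
    ∃ (g : Evec n × Evec m → Evec n) (mg : Evec n × Evec m → ℝ) (ℓ : ℝ), 0 ≤ ℓ ∧
      g (0, 0) = xo ∧
      (∀ p ∈ U ×ˢ W,
        {x : Evec n | ‖x - xo‖ ≤ γ ∧ ∀ x', ‖x' - xo‖ ≤ γ →
          pObj Y B φ₀ Φ p x ≤ pObj Y B φ₀ Φ p x'} = {g p}) ∧
      (∀ p ∈ U ×ˢ W, ∀ q ∈ U ×ˢ W, ‖g p - g q‖ ≤ ℓ * ‖p - q‖) ∧
      (∀ p ∈ U ×ˢ W,
        sInf (pObj Y B φ₀ Φ p '' {x | ‖x - xo‖ ≤ γ}) = ((mg p : ℝ) : EReal)) ∧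
      (∀ p ∈ U ×ˢ W, ∀ q ∈ U ×ˢ W, |mg p - mg q| ≤ ℓ * ‖p - q‖)

/-! ### Normal cones and coderivatives on products -/

/-- Regular (Fréchet) normal cone to a subset of ℝ^a × ℝ^b. -/
def regNormalCone2 {a b : ℕ} (Ω : Set (Evec a × Evec b)) (z : Evec a × Evec b) :
    Set (Evec a × Evec b) :=
  {v | ∀ ε > (0 : ℝ), ∃ δ > (0 : ℝ), ∀ w ∈ Ω, ‖w - z‖ < δ →
    ⟪v.1, w.1 - z.1⟫ + ⟪v.2, w.2 - z.2⟫ ≤ ε * ‖w - z‖}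

/-- Limiting (Mordukhovich) normal cone to a subset of ℝ^a × ℝ^b. -/
def limNormalCone2 {a b : ℕ} (Ω : Set (Evec a × Evec b)) (z : Evec a × Evec b) :
    Set (Evec a × Evec b) :=
  {v | ∃ (zs vs : ℕ → Evec a × Evec b), (∀ k, zs k ∈ Ω) ∧
    (∀ k, vs k ∈ regNormalCone2 Ω (zs k)) ∧
    Tendsto zs atTop (𝓝 z) ∧ Tendsto vs atTop (𝓝 v)}

/-- Coderivative of a set-valued mapping between Euclidean spaces. -/
def coDeriv {a b : ℕ} (F : Evec a → Set (Evec b)) (z : Evec a) (w : Evec b)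
    (v : Evec b) : Set (Evec a) :=
  {u | (u, -v) ∈ limNormalCone2 (svGraph F) (z, w)}

end

/-! Λ(x̄) = M_{x̄}(0,0) is convex, so an isolated point of it is its only point: isolated calmness
of M_{x̄} gives uniqueness, and calmness. Isolated calmness in turn follows from the graphical
derivative criterion DM_{x̄}((0,0),λ̄)(0) = {0}, and every η in that derivative lies in
D(∂θ)(z̄,λ̄)(0) ∩ ker ∇Φ(x̄)*.

For the converse one uses that λ ∈ ∂θ(z) iff λ ∈ Y and z - Bλ ∈ N_Y(λ). Monotonicity of this
relation shows that η ∈ D(∂θ)(z̄,λ̄)(0) satisfies Bη = 0 and lies in the critical cone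
T_Y(λ̄) ∩ (z̄ - Bλ̄)^⊥; as Y is polyhedral, λ̄ + sη ∈ Y for small s > 0, and then λ̄ + sη is again
a multiplier whenever ∇Φ(x̄)*η = 0. -/

section RealInnerProduct

variable {E : Type*} [NormedAddCommGroup E] [InnerProductSpace ℝ E]

lemma map_eq_zero_of_inner_map_self_nonpos {B : E →L[ℝ] E}
    (hBsym : ∀ u v, ⟪B u, v⟫ = ⟪u, B v⟫) (hBpsd : ∀ u, 0 ≤ ⟪u, B u⟫)
    {η : E} (h : ⟪B η, η⟫ ≤ 0) : B η = 0 := by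
  have hη : ⟪η, B η⟫ = 0 := le_antisymm (real_inner_comm η (B η) ▸ h) (hBpsd η)
  -- `t ↦ ⟪η + t Bη, B (η + t Bη)⟫` is a nonnegative quadratic without constant term.
  have hquad : ∀ t : ℝ, 0 ≤ ⟪B η, B (B η)⟫ * (t * t) + 2 * ‖B η‖ ^ 2 * t + 0 := by
    intro t
    have h := hBpsd (η + t • B η)
    rw [map_add, map_smul] at h
    simp only [inner_add_left, inner_add_right, real_inner_smul_left, real_inner_smul_right,
      hη, ← hBsym η (B η), real_inner_self_eq_norm_sq] at h
    linarith
  have hsq : (2 * ‖B η‖ ^ 2) ^ 2 = 0 :=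
    le_antisymm (by simpa [discrim] using discrim_le_zero hquad) (sq_nonneg _)
  simpa using hsq

lemma inner_sub_half_inner_map_sub {B : E →L[ℝ] E} (hBsym : ∀ u v, ⟪B u, v⟫ = ⟪u, B v⟫)
    (z lam y : E) :
    ⟪y, z⟫ - (1 / 2) * ⟪y, B y⟫ - (⟪lam, z⟫ - (1 / 2) * ⟪lam, B lam⟫)
      = ⟪z - B lam, y - lam⟫ - (1 / 2) * ⟪y - lam, B (y - lam)⟫ := by
  have hsym : ⟪lam, B y⟫ = ⟪y, B lam⟫ := by rw [← hBsym, real_inner_comm]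
  rw [map_sub]
  simp only [inner_sub_left, inner_sub_right]
  linarith [real_inner_comm z y, real_inner_comm z lam, real_inner_comm (B lam) y,
    real_inner_comm (B lam) lam]

end RealInnerProduct

lemma Convex.eq_singleton_of_inter_subset {E : Type*} [AddCommGroup E] [Module ℝ E]
    [TopologicalSpace E] [ContinuousAdd E] [ContinuousSMul ℝ E] {s V : Set E} {x : E}
    (hs : Convex ℝ s) (hx : x ∈ s) (hV : V ∈ 𝓝 x) (h : s ∩ V ⊆ {x}) : s = {x} := by
  refine Set.eq_singleton_iff_unique_mem.mpr ⟨hx, fun y hy => ?_⟩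
  have hseg : Tendsto (fun t : ℝ => x + t • (y - x)) (𝓝[>] 0) (𝓝 x) := by
    have : Continuous fun t : ℝ => x + t • (y - x) := by fun_prop
    simpa using (this.tendsto 0).mono_left nhdsWithin_le_nhds
  obtain ⟨t, htV, ht⟩ := ((hseg.eventually_mem hV).and (Ioo_mem_nhdsGT one_pos)).exists
  have hxt : x + t • (y - x) = x := h ⟨hs.add_smul_sub_mem hx hy ⟨ht.1.le, ht.2.le⟩, htV⟩
  simpa [ht.1.ne', sub_eq_zero] using hxt

lemma convex_subdiff {k : ℕ} (θ : Evec k → EReal) (z : Evec k) : Convex ℝ (subdiff θ z) := by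
  intro v hv w hw a b ha hb hab u
  have hcomb : ⟪a • v + b • w, u - z⟫ ≤ max ⟪v, u - z⟫ ⟪w, u - z⟫ := by
    calc ⟪a • v + b • w, u - z⟫ = a * ⟪v, u - z⟫ + b * ⟪w, u - z⟫ := by
          rw [inner_add_left, real_inner_smul_left, real_inner_smul_left]
      _ ≤ a * max ⟪v, u - z⟫ ⟪w, u - z⟫ + b * max ⟪v, u - z⟫ ⟪w, u - z⟫ := by
          gcongr
          exacts [le_max_left _ _, le_max_right _ _]
      _ = max ⟪v, u - z⟫ ⟪w, u - z⟫ := by rw [← add_mul, hab, one_mul]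
  rcases max_choice ⟪v, u - z⟫ ⟪w, u - z⟫ with hmax | hmax <;> rw [hmax] at hcomb
  · exact le_trans (by gcongr) (hv u)
  · exact le_trans (by gcongr) (hw u)

lemma IsPolyhedral.convex {m : ℕ} {Y : Set (Evec m)} (hY : IsPolyhedral Y) : Convex ℝ Y := by
  obtain ⟨p, b, c, rfl⟩ := hY
  intro x hx y hy s t hs ht hst i
  calc ⟪b i, s • x + t • y⟫ = s * ⟪b i, x⟫ + t * ⟪b i, y⟫ := by
        rw [inner_add_right, real_inner_smul_right, real_inner_smul_right]
    _ ≤ s * c i + t * c i := by gcongr; exacts [hx i, hy i]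
    _ = c i := by rw [← add_mul, hst, one_mul]

lemma IsPolyhedral.eventually_add_smul_mem {m : ℕ} {Y : Set (Evec m)} (hY : IsPolyhedral Y)
    {y η : Evec m} (hy : y ∈ Y) (hη : η ∈ bTangentCone Y y) :
    ∀ᶠ s in 𝓝[>] (0 : ℝ), y + s • η ∈ Y := by
  obtain ⟨p, b, c, rfl⟩ := hY
  obtain ⟨ys, a, hys, ha, -, hlim⟩ := hη
  refine eventually_all.mpr fun i => ?_
  simp only [inner_add_right, real_inner_smul_right]
  rcases (hy i).lt_or_eq with hinactive | hactive
  · have hcont : Continuous fun s : ℝ => ⟪b i, y⟫ + s * ⟪b i, η⟫ := by fun_prop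
    have := (hcont.tendsto 0).mono_left (nhdsWithin_le_nhds (s := Set.Ioi 0))
    simp only [zero_mul, add_zero] at this
    exact (this.eventually (eventually_lt_nhds hinactive)).mono fun s hs => hs.le
  · have hη : ⟪b i, η⟫ ≤ 0 := by
      refine le_of_tendsto (tendsto_const_nhds.inner hlim) (Eventually.of_forall fun k => ?_)
      rw [real_inner_smul_right, inner_sub_right, hactive]
      exact mul_nonpos_of_nonneg_of_nonpos (ha k) (sub_nonpos.mpr (hys k i))
    filter_upwards [self_mem_nhdsWithin] with s hs
    nlinarith [mul_nonpos_of_nonneg_of_nonpos (le_of_lt hs) hη]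

section SetValued

variable {A B : Type*} [NormedAddCommGroup A] [NormedAddCommGroup B]

lemma IsolCalm.calm {F : A → Set B} {z : A} {w : B} (h : IsolCalm F z w) (hw : w ∈ F z) :
    Calm F z w := by
  obtain ⟨ℓ, hℓ, U, hU, V, hV, hF⟩ := h
  exact ⟨ℓ, hℓ, U, hU, V, hV, fun z' hz' w' hw' => ⟨w, hw, hF z' hz' w' hw'⟩⟩

lemma IsolCalm.exists_inter_subset {F : A → Set B} {z : A} {w : B} (h : IsolCalm F z w) :
    ∃ V ∈ 𝓝 w, F z ∩ V ⊆ {w} := by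
  obtain ⟨ℓ, -, U, hU, V, hV, hF⟩ := h
  refine ⟨V, hV, fun w' hw' => ?_⟩
  simpa [sub_eq_zero] using hF z (mem_of_mem_nhds hU) w' hw'

end SetValued

lemma zero_mem_bTangentCone {F : Type*} [NormedAddCommGroup F] [NormedSpace ℝ F]
    {Ω : Set F} {z : F} (hz : z ∈ Ω) : 0 ∈ bTangentCone Ω z :=
  ⟨fun _ => z, fun _ => 0, fun _ => hz, fun _ => le_rfl, tendsto_const_nhds, by simp⟩

lemma isolCalm_of_gDeriv_subset {A B : Type*} [NormedAddCommGroup A] [NormedSpace ℝ A]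
    [NormedAddCommGroup B] [NormedSpace ℝ B] [ProperSpace B]
    {F : A → Set B} {z : A} {w : B} (h : gDeriv F z w 0 ⊆ {0}) : IsolCalm F z w := by
  by_contra hnc
  simp only [IsolCalm, not_exists, not_and, not_forall, not_le] at hnc
  have hseq : ∀ k : ℕ, ∃ z' ∈ ball z (1 / (k + 1)), ∃ w' ∈ F z' ∩ ball w (1 / (k + 1)),
      (k + 1) * ‖z' - z‖ < ‖w' - w‖ := fun k => by
    have hr : (0 : ℝ) < 1 / (k + 1) := by positivity
    obtain ⟨z', hz', w', hw', hlt⟩ :=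
      hnc (k + 1) (by positivity) _ (ball_mem_nhds z hr) _ (ball_mem_nhds w hr)
    exact ⟨z', hz', w', hw', hlt⟩
  choose zs hzs ws hws hgt using hseq
  have ht : ∀ k, 0 < ‖ws k - w‖ := fun k => lt_of_le_of_lt (by positivity) (hgt k)
  have hzlim : Tendsto zs atTop (𝓝 z) := tendsto_iff_dist_tendsto_zero.mpr <|
    squeeze_zero (fun _ => dist_nonneg) (fun k => (hzs k).le)
      tendsto_one_div_add_atTop_nhds_zero_nat
  have hwlim : Tendsto ws atTop (𝓝 w) := tendsto_iff_dist_tendsto_zero.mpr <|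
    squeeze_zero (fun _ => dist_nonneg) (fun k => (hws k).2.le)
      tendsto_one_div_add_atTop_nhds_zero_nat
  -- Rescaled by `‖ws k - w‖`, the value displacements become unit vectors while the argument
  -- displacements tend to zero.
  have hzscaled : Tendsto (fun k => ‖ws k - w‖⁻¹ • (zs k - z)) atTop (𝓝 0) := by
    refine squeeze_zero_norm (fun k => ?_) tendsto_one_div_add_atTop_nhds_zero_nat
    rw [norm_smul, norm_inv, norm_norm, inv_mul_le_iff₀ (ht k), mul_one_div,
      le_div_iff₀ (by positivity)]
    linarith [hgt k]
  have hsphere : ∀ k, ‖ws k - w‖⁻¹ • (ws k - w) ∈ sphere (0 : B) 1 := fun k => by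
    simp [norm_smul, (ht k).ne']
  obtain ⟨η, hη, φ, hφ, hlim⟩ := (isCompact_sphere (0 : B) 1).tendsto_subseq hsphere
  have hηT : η ∈ gDeriv F z w 0 := by
    refine ⟨fun k => (zs (φ k), ws (φ k)), fun k => ‖ws (φ k) - w‖⁻¹,
      fun k => (hws (φ k)).1, fun k => by positivity,
      (hzlim.prodMk_nhds hwlim).comp hφ.tendsto_atTop, ?_⟩
    simp only [Prod.mk_sub_mk, Prod.smul_mk]
    exact (hzscaled.comp hφ.tendsto_atTop).prodMk_nhds hlim
  have hη0 : η = 0 := h hηT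
  simp [hη0] at hη

section PiecewiseLinearQuadratic

variable {m : ℕ} {Y : Set (Evec m)} {B : Evec m →L[ℝ] Evec m}

lemma coe_le_thetaY {y : Evec m} (hy : y ∈ Y) (u : Evec m) :
    ((⟪y, u⟫ - (1 / 2) * ⟪y, B y⟫ : ℝ) : EReal) ≤ thetaY Y B u :=
  le_biSup (fun y => ((⟪y, u⟫ - (1 / 2) * ⟪y, B y⟫ : ℝ) : EReal)) hy

lemma thetaY_le_coe {u : Evec m} {M : ℝ} (h : ∀ y ∈ Y, ⟪y, u⟫ - (1 / 2) * ⟪y, B y⟫ ≤ M) :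
    thetaY Y B u ≤ M :=
  iSup₂_le fun y hy => EReal.coe_le_coe_iff.mpr (h y hy)

lemma thetaY_add_le {z b : Evec m} {c : ℝ} (hb : ∀ y ∈ Y, ⟪b, y⟫ ≤ c) :
    thetaY Y B (z + b) ≤ thetaY Y B z + c := by
  refine iSup₂_le fun y hy => ?_
  calc ((⟪y, z + b⟫ - (1 / 2) * ⟪y, B y⟫ : ℝ) : EReal)
      = ((⟪y, z⟫ - (1 / 2) * ⟪y, B y⟫ : ℝ) : EReal) + ((⟪b, y⟫ : ℝ) : EReal) := by
        rw [← EReal.coe_add, inner_add_right, real_inner_comm b]; ring_nf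
    _ ≤ thetaY Y B z + c := add_le_add (coe_le_thetaY hy z) (EReal.coe_le_coe_iff.mpr (hb y hy))

lemma thetaY_map_le (hBsym : ∀ u v : Evec m, ⟪B u, v⟫ = ⟪u, B v⟫)
    (hBpsd : ∀ u : Evec m, 0 ≤ ⟪u, B u⟫) (lam : Evec m) :
    thetaY Y B (B lam) ≤ (((1 / 2) * ⟪lam, B lam⟫ : ℝ) : EReal) :=
  thetaY_le_coe fun y _ => by
    have := inner_sub_half_inner_map_sub hBsym (B lam) lam y
    rw [sub_self, inner_zero_left] at this
    linarith [hBpsd (y - lam)]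

lemma mem_convNormalCone_of_isMaxOn (hBsym : ∀ u v : Evec m, ⟪B u, v⟫ = ⟪u, B v⟫)
    (hY : Convex ℝ Y) {z lam : Evec m} (hlam : lam ∈ Y)
    (hmax : IsMaxOn (fun y => ⟪y, z⟫ - (1 / 2) * ⟪y, B y⟫) Y lam) :
    z - B lam ∈ convNormalCone Y lam := by
  intro y hy
  have hlim : Tendsto (fun s : ℝ => s / 2 * ⟪y - lam, B (y - lam)⟫) (𝓝[>] 0) (𝓝 0) := by
    have : Continuous fun s : ℝ => s / 2 * ⟪y - lam, B (y - lam)⟫ := by fun_prop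
    simpa using (this.tendsto 0).mono_left nhdsWithin_le_nhds
  refine ge_of_tendsto hlim ?_
  filter_upwards [Ioo_mem_nhdsGT one_pos] with s hs
  have h := isMaxOn_iff.mp hmax _ (hY.add_smul_sub_mem hlam hy ⟨hs.1.le, hs.2.le⟩)
  rw [← sub_nonpos, inner_sub_half_inner_map_sub hBsym, add_sub_cancel_left, map_smul,
    real_inner_smul_left, real_inner_smul_right, real_inner_smul_right] at h
  nlinarith [hs.1]

lemma thetaY_eq_of_mem_convNormalCone (hBsym : ∀ u v : Evec m, ⟪B u, v⟫ = ⟪u, B v⟫)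
    (hBpsd : ∀ u : Evec m, 0 ≤ ⟪u, B u⟫) {z lam : Evec m} (hlam : lam ∈ Y)
    (hN : z - B lam ∈ convNormalCone Y lam) :
    thetaY Y B z = ((⟪lam, z⟫ - (1 / 2) * ⟪lam, B lam⟫ : ℝ) : EReal) := by
  refine le_antisymm (thetaY_le_coe fun y hy => ?_) (coe_le_thetaY hlam z)
  linarith [inner_sub_half_inner_map_sub hBsym z lam y, hBpsd (y - lam), hN y hy]

lemma mem_subdiff_thetaY_iff (hYne : Y.Nonempty) (hYpoly : IsPolyhedral Y)
    (hBsym : ∀ u v : Evec m, ⟪B u, v⟫ = ⟪u, B v⟫) (hBpsd : ∀ u : Evec m, 0 ≤ ⟪u, B u⟫)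
    {z lam : Evec m} :
    lam ∈ subdiff (thetaY Y B) z ↔ lam ∈ Y ∧ z - B lam ∈ convNormalCone Y lam := by
  refine ⟨fun h => ?_, fun ⟨hlam, hN⟩ u => ?_⟩
  · -- Testing the subgradient inequality at `B lam` and at `z + b i` shows that the supremum
    -- defining `thetaY Y B z` is finite and attained at `lam ∈ Y`.
    obtain ⟨y₀, hy₀⟩ := hYne
    have hlow := coe_le_thetaY (B := B) hy₀ z
    have hup := (h (B lam)).trans (thetaY_map_le hBsym hBpsd lam)
    have hsub : ∀ u, thetaY Y B z + ((⟪lam, u - z⟫ : ℝ) : EReal) ≤ thetaY Y B u := h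
    generalize hr : thetaY Y B z = r at hlow hup hsub
    induction r using EReal.rec with
    | bot => exact absurd hlow (not_le.mpr (EReal.bot_lt_coe _))
    | top => rw [EReal.top_add_coe] at hup; exact absurd hup (not_le.mpr (EReal.coe_lt_top _))
    | coe r =>
      have hle : ∀ y ∈ Y, ⟪y, z⟫ - (1 / 2) * ⟪y, B y⟫ ≤ r := fun y hy => by
        exact_mod_cast hr ▸ coe_le_thetaY hy z
      have hlam : lam ∈ Y := by
        obtain ⟨p, b, c, hY⟩ := hYpoly
        have hb : ∀ i, ∀ y ∈ Y, ⟪b i, y⟫ ≤ c i := fun i y hy => (hY ▸ hy : _) i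
        rw [hY]
        intro i
        have := (hsub (z + b i)).trans (thetaY_add_le (hb i))
        rw [hr, add_sub_cancel_left, real_inner_comm] at this
        have : r + ⟪b i, lam⟫ ≤ r + c i := by exact_mod_cast this
        linarith
      refine ⟨hlam, mem_convNormalCone_of_isMaxOn hBsym hYpoly.convex hlam
        (isMaxOn_iff.mpr fun y hy => ?_)⟩
      have : r + ⟪lam, B lam - z⟫ ≤ (1 / 2) * ⟪lam, B lam⟫ := by exact_mod_cast hup
      rw [inner_sub_right] at this
      linarith [hle y hy]
  · rw [thetaY_eq_of_mem_convNormalCone hBsym hBpsd hlam hN, ← EReal.coe_add]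
    refine le_trans (le_of_eq ?_) (coe_le_thetaY hlam u)
    rw [inner_sub_right]
    ring_nf

lemma inner_map_sub_le_of_mem_convNormalCone {u₁ u₂ μ₁ μ₂ : Evec m} (hμ₁ : μ₁ ∈ Y)
    (hμ₂ : μ₂ ∈ Y) (hN₁ : u₁ - B μ₁ ∈ convNormalCone Y μ₁)
    (hN₂ : u₂ - B μ₂ ∈ convNormalCone Y μ₂) :
    ⟪B (μ₁ - μ₂), μ₁ - μ₂⟫ ≤ ⟪u₁ - u₂, μ₁ - μ₂⟫ := by
  have h₁ := hN₁ μ₂ hμ₂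
  have h₂ := hN₂ μ₁ hμ₁
  rw [← neg_sub μ₁ μ₂, inner_neg_right] at h₁
  simp only [map_sub, inner_sub_left] at h₁ h₂ ⊢
  linarith

lemma gDeriv_subdiff_thetaY_zero_subset (hYne : Y.Nonempty) (hYpoly : IsPolyhedral Y)
    (hBsym : ∀ u v : Evec m, ⟪B u, v⟫ = ⟪u, B v⟫) (hBpsd : ∀ u : Evec m, 0 ≤ ⟪u, B u⟫)
    {z lam : Evec m} (hlam : lam ∈ subdiff (thetaY Y B) z) :
    gDeriv (subdiff (thetaY Y B)) z lam 0 ⊆ critCone Y B z lam ∩ {η | B η = 0} := by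
  rintro η ⟨ps, a, hps, ha, hconv, hlim⟩
  have hsub {u μ : Evec m} := mem_subdiff_thetaY_iff (z := u) (lam := μ) hYne hYpoly hBsym hBpsd
  obtain ⟨hlamY, hlamN⟩ := hsub.mp hlam
  have hgr : ∀ k, (ps k).2 ∈ Y ∧ (ps k).1 - B (ps k).2 ∈ convNormalCone Y (ps k).2 :=
    fun k => hsub.mp (hps k)
  have hdz : Tendsto (fun k => a k • ((ps k).1 - z)) atTop (𝓝 0) := hlim.fst_nhds
  have hdlam : Tendsto (fun k => a k • ((ps k).2 - lam)) atTop (𝓝 η) := hlim.snd_nhds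
  have hmono : ∀ k, ⟪B (a k • ((ps k).2 - lam)), a k • ((ps k).2 - lam)⟫
      ≤ ⟪a k • ((ps k).1 - z), a k • ((ps k).2 - lam)⟫ := fun k => by
    simp only [map_smul, real_inner_smul_left, real_inner_smul_right, ← mul_assoc]
    exact mul_le_mul_of_nonneg_left
      (inner_map_sub_le_of_mem_convNormalCone (hgr k).1 hlamY (hgr k).2 hlamN)
      (mul_nonneg (ha k) (ha k))
  have hBη : B η = 0 := by
    refine map_eq_zero_of_inner_map_self_nonpos hBsym hBpsd ?_
    simpa using le_of_tendsto_of_tendsto' (((B.continuous.tendsto _).comp hdlam).inner hdlam)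
      (hdz.inner hdlam) hmono
  have hcrit_le : ⟪z - B lam, η⟫ ≤ 0 := by
    refine le_of_tendsto (tendsto_const_nhds.inner hdlam) (Eventually.of_forall fun k => ?_)
    rw [real_inner_smul_right]
    exact mul_nonpos_of_nonneg_of_nonpos (ha k) (hlamN _ (hgr k).1)
  have hcrit_ge : 0 ≤ ⟪z - B lam, η⟫ := by
    have hres : Tendsto (fun k => (ps k).1 - B (ps k).2) atTop (𝓝 (z - B lam)) :=
      hconv.fst_nhds.sub ((B.continuous.tendsto _).comp hconv.snd_nhds)
    refine ge_of_tendsto (hres.inner hdlam) (Eventually.of_forall fun k => ?_)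
    have := (hgr k).2 lam hlamY
    rw [← neg_sub (ps k).2 lam, inner_neg_right] at this
    rw [real_inner_smul_right]
    exact mul_nonneg (ha k) (by linarith)
  exact ⟨⟨⟨fun k => (ps k).2, a, fun k => (hgr k).1, ha, hconv.snd_nhds, hdlam⟩,
    le_antisymm hcrit_le hcrit_ge⟩, hBη⟩

end PiecewiseLinearQuadratic

section VariationalSystem

variable {n m : ℕ} {Y : Set (Evec m)} {B : Evec m →L[ℝ] Evec m}
  {f : Evec n → Evec n} {Φ : Evec n → Evec m} {xo : Evec n} {lmo : Evec m}

lemma multMap_zero : MultMap Y B f Φ xo ((0, 0) : Evec n × Evec m) = LagMult Y B f Φ xo := by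
  simp [MultMap, LagMult]

lemma convex_lagMult : Convex ℝ (LagMult Y B f Φ xo) := by
  refine Convex.inter (s := {lam | Psi f Φ xo lam = 0})
    (fun x (hx : Psi f Φ xo x = 0) y (hy : Psi f Φ xo y = 0) a b _ _ hab => ?_) (convex_subdiff _ _)
  change Psi f Φ xo (a • x + b • y) = 0
  simp only [Psi, map_add, map_smul] at hx hy ⊢
  linear_combination (norm := module) a • hx + b • hy - hab • f xo

lemma gDeriv_multMap_subset (hsol1 : Psi f Φ xo lmo = 0) :
    gDeriv (MultMap Y B f Φ xo) ((0, 0) : Evec n × Evec m) lmo 0 ⊆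
      gDeriv (subdiff (thetaY Y B)) (Φ xo) lmo 0 ∩
        {v | ContinuousLinearMap.adjoint (fderiv ℝ Φ xo) v = 0} := by
  rintro η ⟨ps, a, hps, ha, hconv, hlim⟩
  have hp : Tendsto (fun k => a k • (ps k).1) atTop (𝓝 0) := by
    simpa [Prod.mk_zero_zero] using hlim.fst_nhds
  have hdlam : Tendsto (fun k => a k • ((ps k).2 - lmo)) atTop (𝓝 η) := hlim.snd_nhds
  refine ⟨⟨fun k => (Φ xo + (ps k).1.2, (ps k).2), a, fun k => (hps k).2, ha, ?_, ?_⟩, ?_⟩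
  · simpa using (tendsto_const_nhds.add hconv.fst_nhds.snd_nhds).prodMk_nhds hconv.snd_nhds
  · simp only [Prod.mk_sub_mk, add_sub_cancel_left, Prod.smul_mk]
    exact hp.snd_nhds.prodMk_nhds hdlam
  · have hA : ∀ k, ContinuousLinearMap.adjoint (fderiv ℝ Φ xo) (a k • ((ps k).2 - lmo))
        = a k • (ps k).1.1 := fun k => by
      have h := (hps k).1
      simp only [Psi] at h hsol1
      rw [map_smul, map_sub, ← h]
      congr 1
      linear_combination (norm := module) -hsol1
    exact tendsto_nhds_unique (((ContinuousLinearMap.continuous _).tendsto η).comp hdlam)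
      (by simpa [Function.comp_def, hA] using hp.fst_nhds)

lemma eq_zero_of_mem_gDeriv_of_lagMult_eq_singleton (hYne : Y.Nonempty) (hYpoly : IsPolyhedral Y)
    (hBsym : ∀ u v : Evec m, ⟪B u, v⟫ = ⟪u, B v⟫) (hBpsd : ∀ u : Evec m, 0 ≤ ⟪u, B u⟫)
    (hsol1 : Psi f Φ xo lmo = 0) (hsol2 : lmo ∈ subdiff (thetaY Y B) (Φ xo))
    (huniq : LagMult Y B f Φ xo = {lmo}) {η : Evec m}
    (hη : η ∈ gDeriv (subdiff (thetaY Y B)) (Φ xo) lmo 0)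
    (hker : ContinuousLinearMap.adjoint (fderiv ℝ Φ xo) η = 0) : η = 0 := by
  have hsub {lam : Evec m} :=
    mem_subdiff_thetaY_iff (z := Φ xo) (lam := lam) hYne hYpoly hBsym hBpsd
  obtain ⟨⟨hηT, hηcrit⟩, hBη⟩ := gDeriv_subdiff_thetaY_zero_subset hYne hYpoly hBsym hBpsd hsol2 hη
  obtain ⟨hlmoY, hlmoN⟩ := hsub.mp hsol2
  obtain ⟨s, hsY, hs⟩ := ((hYpoly.eventually_add_smul_mem hlmoY hηT).and self_mem_nhdsWithin).exists
  have hmem : lmo + s • η ∈ LagMult Y B f Φ xo := by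
    refine ⟨by simpa [Psi, hker] using hsol1, hsub.mpr ⟨hsY, fun y hy => ?_⟩⟩
    have hcrit : ⟪Φ xo - B lmo, η⟫ = 0 := hηcrit
    rw [map_add, map_smul, hBη, smul_zero, add_zero, ← sub_sub, inner_sub_right,
      real_inner_smul_right, hcrit, mul_zero, sub_zero]
    exact hlmoN y hy
  rw [huniq] at hmem
  simpa [hs.ne'] using hmem

end VariationalSystem

theorem uniqueness_characterizations_general {n m : ℕ} (Y : Set (Evec m)) (hYne : Y.Nonempty) (hYpoly : IsPolyhedral Y)
    (B : Evec m →L[ℝ] Evec m) (hBsym : ∀ u v : Evec m, ⟪B u, v⟫ = ⟪u, B v⟫)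
    (hBpsd : ∀ u : Evec m, 0 ≤ ⟪u, B u⟫)
    (f : Evec n → Evec n) (Φ : Evec n → Evec m)
    (xo : Evec n) (lmo : Evec m)
    (hsol1 : Psi f Φ xo lmo = 0)
    (hsol2 : lmo ∈ subdiff (thetaY Y B) (Φ xo)) :
    List.TFAE
      [LagMult Y B f Φ xo = {lmo},
       Calm (MultMap Y B f Φ xo) ((0, 0) : Evec n × Evec m) lmo ∧
         LagMult Y B f Φ xo = {lmo},
       IsolCalm (MultMap Y B f Φ xo) ((0, 0) : Evec n × Evec m) lmo,
       gDeriv (subdiff (thetaY Y B)) (Φ xo) lmo 0 ∩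
           {v | ContinuousLinearMap.adjoint (fderiv ℝ Φ xo) v = 0} = {0}] := by
  have hmem : lmo ∈ LagMult Y B f Φ xo := ⟨hsol1, hsol2⟩
  tfae_have 1 → 4 := fun huniq => by
    refine subset_antisymm (fun η ⟨hη, hker⟩ => eq_zero_of_mem_gDeriv_of_lagMult_eq_singleton
      hYne hYpoly hBsym hBpsd hsol1 hsol2 huniq hη hker) ?_
    rintro _ rfl
    exact ⟨zero_mem_bTangentCone hsol2, map_zero _⟩
  tfae_have 4 → 3 := fun hqual =>
    isolCalm_of_gDeriv_subset fun η hη => hqual ▸ gDeriv_multMap_subset hsol1 hη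
  tfae_have 3 → 2 := fun hisol => by
    obtain ⟨V, hV, hiso⟩ := hisol.exists_inter_subset
    rw [multMap_zero] at hiso
    exact ⟨hisol.calm (multMap_zero ▸ hmem),
      convex_lagMult.eq_singleton_of_inter_subset hmem hV hiso⟩
  tfae_have 2 → 1 := And.right
  tfae_finish

/-- Characterizations of uniqueness of Lagrange multipliers in variational systems. -/
theorem uniqueness_characterizations {n m : ℕ} (Y : Set (Evec m)) (hYne : Y.Nonempty) (hYpoly : IsPolyhedral Y)
    (B : Evec m →L[ℝ] Evec m) (hBsym : ∀ u v : Evec m, ⟪B u, v⟫ = ⟪u, B v⟫)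
    (hBpsd : ∀ u : Evec m, 0 ≤ ⟪u, B u⟫)
    (f : Evec n → Evec n) (hf : Differentiable ℝ f)
    (Φ : Evec n → Evec m) (hΦ : ContDiff ℝ 2 Φ)
    (xo : Evec n) (lmo : Evec m)
    (hsol1 : Psi f Φ xo lmo = 0)
    (hsol2 : lmo ∈ subdiff (thetaY Y B) (Φ xo)) :
    List.TFAE
      [LagMult Y B f Φ xo = {lmo},
       Calm (MultMap Y B f Φ xo) ((0, 0) : Evec n × Evec m) lmo ∧
         LagMult Y B f Φ xo = {lmo},
       IsolCalm (MultMap Y B f Φ xo) ((0, 0) : Evec n × Evec m) lmo,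
       gDeriv (subdiff (thetaY Y B)) (Φ xo) lmo 0 ∩
           {v | ContinuousLinearMap.adjoint (fderiv ℝ Φ xo) v = 0} = {0}] :=
  uniqueness_characterizations_general Y hYne hYpoly B hBsym hBpsd f Φ xo lmo hsol1 hsol2
end

section
/- Let (x̄,λ̄) be a solution of the KKT system ∇_xL(x,λ) = 0, λ ∈ ∂θ(Φ(x)) for the ENLP, and assume the second-order sufficient condition holds: ⟨∇²_{xx}L(x̄,λ̄)w, w⟩ + 2θ_{K,B}(∇Φ(x̄)w) > 0 for every w ∈ ℝ^n \ {0} with ∇Φ(x̄)w ∈ K* + rge B. Then there exist ε > 0 and ℓ > 0 such that the quadratic growth estimate φ(x) ≥ φ(x̄) + ℓ‖x − x̄‖² holds for all x ∈ B_ε(x̄), where φ := φ₀ + θ∘Φ; in particular, x̄ is a strict local minimizer of the ENLP. -/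
open Filter Topology Metric Set Pointwise
open scoped RealInnerProductSpace

/-!
If quadratic growth fails, there are `t_k → 0⁺` and directions `w_k → w₀ ≠ 0` with
`φ(x̄ + t_k w_k) ≤ φ(x̄) + o(t_k²)`. For `v` in the critical cone `K`, the points `λ̄ + t_k v`
lie in the polyhedron `Y`, so testing the supremum defining `θ` there and expanding the Lagrangian
to second order yields `⟨v, ∇Φ(x̄)w₀⟩ - ½⟨v, Bv⟩ ≤ -½⟨∇²ₓₓL(x̄,λ̄)w₀, w₀⟩` for all `v ∈ K`.
Thus `θ_{K,B}(∇Φ(x̄)w₀)` is finite; since `K` is polyhedral, Farkas' lemma applied to `K ∩ ker B`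
puts `∇Φ(x̄)w₀` in `K* + rge B`, and the same bound then contradicts the second-order condition
at `w₀`.
-/

section Polyhedron

variable {E : Type*} [NormedAddCommGroup E] [InnerProductSpace ℝ E] {ι : Type*}

def polyhedron (b : ι → E) (c : ι → ℝ) : Set E := {y | ∀ i, ⟪b i, y⟫ ≤ c i}

theorem isClosed_polyhedron (b : ι → E) (c : ι → ℝ) : IsClosed (polyhedron b c) := by
  simp only [polyhedron, Set.ofPred_forall]
  exact isClosed_iInter fun i => isClosed_le (continuous_const.inner continuous_id) continuous_const

theorem convex_polyhedron (b : ι → E) (c : ι → ℝ) : Convex ℝ (polyhedron b c) := by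
  simp only [polyhedron, Set.ofPred_forall]
  exact convex_iInter fun i => convex_halfSpace_le (innerₗ E (b i)).isLinear (c i)

theorem inner_nonpos_of_mem_bTangentCone_polyhedron {b : ι → E} {c : ι → ℝ} {z v : E}
    (hv : v ∈ bTangentCone (polyhedron b c) z) {i : ι} (hi : ⟪b i, z⟫ = c i) : ⟪b i, v⟫ ≤ 0 := by
  obtain ⟨zs, a, hzs, ha, -, hlim⟩ := hv
  refine le_of_tendsto (tendsto_const_nhds.inner hlim) (Eventually.of_forall fun k => ?_)
  rw [real_inner_smul_right, inner_sub_right, hi]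
  exact mul_nonpos_of_nonneg_of_nonpos (ha k) (sub_nonpos.2 (hzs k i))

theorem eventually_add_smul_mem_polyhedron [Finite ι] {b : ι → E} {c : ι → ℝ} {z v : E}
    (hz : z ∈ polyhedron b c) (hv : ∀ i, ⟪b i, z⟫ = c i → ⟪b i, v⟫ ≤ 0) :
    ∀ᶠ s in 𝓝[≥] (0 : ℝ), z + s • v ∈ polyhedron b c := by
  refine eventually_all.2 fun i => ?_
  rcases (hz i).lt_or_eq with hlt | heq
  · have hcont : Tendsto (fun s : ℝ => ⟪b i, z + s • v⟫) (𝓝 0) (𝓝 ⟪b i, z⟫) :=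
      (by fun_prop : Continuous fun s : ℝ => ⟪b i, z + s • v⟫).tendsto' 0 _ (by simp)
    exact nhdsWithin_le_nhds (hcont.eventually (eventually_le_nhds hlt))
  · filter_upwards [self_mem_nhdsWithin] with s (hs : 0 ≤ s)
    rw [inner_add_right, real_inner_smul_right, heq]
    linarith [mul_nonpos_of_nonneg_of_nonpos hs (hv i heq)]

theorem mem_bTangentCone_of_eventually {F : Type*} [NormedAddCommGroup F] [NormedSpace ℝ F]
    {Ω : Set F} {z v : F} (h : ∀ᶠ s in 𝓝[>] (0 : ℝ), z + s • v ∈ Ω) :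
    v ∈ bTangentCone Ω z := by
  have hs : Tendsto (fun k : ℕ => 1 / ((k : ℝ) + 1)) atTop (𝓝[>] 0) :=
    tendsto_nhdsWithin_iff.2 ⟨tendsto_one_div_add_atTop_nhds_zero_nat,
      Eventually.of_forall fun k => by simp only [Set.mem_Ioi]; positivity⟩
  obtain ⟨N, hN⟩ := (hs.eventually h).exists_forall_of_atTop
  refine ⟨fun k => z + (1 / (((k + N : ℕ) : ℝ) + 1)) • v, fun k => ((k + N : ℕ) : ℝ) + 1,
    fun k => hN _ (Nat.le_add_left N k), fun k => by positivity, ?_, ?_⟩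
  · simpa using tendsto_const_nhds.add
      (((hs.mono_right nhdsWithin_le_nhds).comp (tendsto_add_atTop_nat N)).smul_const v)
  · refine tendsto_const_nhds.congr fun k => ?_
    rw [add_sub_cancel_left, smul_smul, mul_one_div_cancel (by positivity), one_smul]

theorem bTangentCone_polyhedron [Finite ι] {b : ι → E} {c : ι → ℝ} {z : E}
    (hz : z ∈ polyhedron b c) :
    bTangentCone (polyhedron b c) z = {v | ∀ i, ⟪b i, z⟫ = c i → ⟪b i, v⟫ ≤ 0} :=
  Set.ext fun _ => ⟨fun hv _ hi => inner_nonpos_of_mem_bTangentCone_polyhedron hv hi, fun hv =>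
    mem_bTangentCone_of_eventually ((eventually_add_smul_mem_polyhedron hz hv).filter_mono
      (nhdsWithin_mono _ Set.Ioi_subset_Ici_self))⟩

theorem eventually_add_smul_mem_of_mem_critCone {m : ℕ} {p : ℕ} {b : Fin p → Evec m}
    {c : Fin p → ℝ} {B : Evec m →L[ℝ] Evec m} {z lam v : Evec m} (hlam : lam ∈ polyhedron b c)
    (hv : v ∈ critCone (polyhedron b c) B z lam) :
    ∀ᶠ s in 𝓝[>] (0 : ℝ), lam + s • v ∈ polyhedron b c :=
  (eventually_add_smul_mem_polyhedron hlam fun _ hi =>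
    inner_nonpos_of_mem_bTangentCone_polyhedron hv.1 hi).filter_mono
      (nhdsWithin_mono _ Set.Ioi_subset_Ici_self)

end Polyhedron

section ConicHull

open Function PointedCone

variable {E : Type*} [NormedAddCommGroup E] [InnerProductSpace ℝ E] {ι : Type*} [Fintype ι]

theorem mem_hull_range_iff {g : ι → E} {x : E} :
    x ∈ hull ℝ (Set.range g) ↔ ∃ lam : ι → ℝ, 0 ≤ lam ∧ ∑ i, lam i • g i = x := by
  rw [hull, Submodule.mem_span_range_iff_exists_fun]
  constructor
  · rintro ⟨c, rfl⟩
    exact ⟨fun i => c i, fun i => (c i).2, by simp⟩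
  · rintro ⟨lam, hlam, rfl⟩
    exact ⟨fun i => ⟨lam i, hlam i⟩, by simp⟩

theorem exists_sub_smul_support_ssubset {lam ν : ι → ℝ} (hlam : 0 ≤ lam)
    (hν : support ν ⊆ support lam) (hpos : ∃ i, 0 < ν i) :
    ∃ t : ℝ, 0 ≤ lam - t • ν ∧ support (lam - t • ν) ⊂ support lam := by
  classical
  obtain ⟨i, hi⟩ := hpos
  obtain ⟨j, hj, hmin⟩ := (Finset.univ.filter (0 < ν ·)).exists_min_image (fun i => lam i / ν i)
    ⟨i, by simpa using hi⟩
  simp only [Finset.mem_filter, Finset.mem_univ, true_and] at hj hmin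
  have ht : 0 ≤ lam j / ν j := div_nonneg (hlam j) hj.le
  refine ⟨lam j / ν j, fun i => ?_, (Set.ssubset_iff_of_subset fun i hi => ?_).2 ⟨j, ?_, ?_⟩⟩
  · rcases lt_or_ge 0 (ν i) with hνi | hνi
    · have := (div_le_div_iff₀ hj hνi).1 (hmin i hνi)
      simp only [Pi.zero_apply, Pi.sub_apply, Pi.smul_apply, smul_eq_mul]
      rw [div_mul_eq_mul_div, sub_nonneg, div_le_iff₀ hj]
      linarith
    · simpa using mul_nonpos_of_nonneg_of_nonpos ht hνi |>.trans (hlam i)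
  · by_contra hlam0
    have hν0 : ν i = 0 := by_contra fun h => hlam0 (hν h)
    simp [hν0, notMem_support.1 hlam0] at hi
  · exact hν hj.ne'
  · simp [hj.ne']

theorem exists_linearIndepOn_support (g : ι → E) {lam : ι → ℝ} (hlam : 0 ≤ lam) :
    ∃ μ : ι → ℝ, 0 ≤ μ ∧ LinearIndepOn ℝ g (support μ) ∧
      ∑ i, μ i • g i = ∑ i, lam i • g i := by
  induction h : (support lam).ncard using Nat.strong_induction_on generalizing lam with
  | _ N ih =>
  by_cases hli : LinearIndepOn ℝ g (support lam)
  · exact ⟨lam, hlam, hli, rfl⟩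
  obtain ⟨l, hl, hlg, hl0⟩ : ∃ l ∈ Finsupp.supported ℝ ℝ (support lam),
      Finsupp.linearCombination ℝ g l = 0 ∧ l ≠ 0 := by
    simpa [linearIndepOn_iff] using hli
  rw [Finsupp.mem_supported, ← Finsupp.fun_support_eq] at hl
  rw [Finsupp.linearCombination_apply, Finsupp.sum_fintype _ _ (by simp)] at hlg
  obtain ⟨ν, hνs, hνg, hpos⟩ : ∃ ν : ι → ℝ, support ν ⊆ support lam ∧
      ∑ i, ν i • g i = 0 ∧ ∃ i, 0 < ν i := by
    obtain ⟨i, hi⟩ := Finsupp.ne_iff.1 hl0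
    rcases hi.lt_or_gt with hneg | hpos
    · exact ⟨-⇑l, by rwa [support_neg], by simp [neg_smul, hlg], i, by simpa using hneg⟩
    · exact ⟨l, hl, hlg, i, hpos⟩
  obtain ⟨t, ht, hss⟩ := exists_sub_smul_support_ssubset hlam hνs hpos
  obtain ⟨μ, hμ, hli, hsum⟩ := ih _ (h ▸ Set.ncard_lt_ncard hss (Set.toFinite _)) ht rfl
  refine ⟨μ, hμ, hli, hsum.trans ?_⟩
  simp [sub_smul, Finset.sum_sub_distrib, mul_smul, ← Finset.smul_sum, hνg]

theorem isClosed_hull_range_of_linearIndependent {g : ι → E} (hg : LinearIndependent ℝ g) :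
    IsClosed (hull ℝ (Set.range g) : Set E) := by
  have hinj := linearIndependent_iff_injective_fintypeLinearCombination.1 hg
  have heq : (hull ℝ (Set.range g) : Set E) = Fintype.linearCombination ℝ g '' Set.Ici 0 := by
    ext x
    simp [mem_hull_range_iff, Fintype.linearCombination_apply]
  rw [heq]
  exact (LinearMap.isClosedEmbedding_of_injective (LinearMap.ker_eq_bot.2 hinj)).isClosedMap _
    isClosed_Ici

theorem isClosed_hull_range (g : ι → E) : IsClosed (hull ℝ (Set.range g) : Set E) := by
  classical
  have heq : (hull ℝ (Set.range g) : Set E) = ⋃ S ∈ {S : Set ι | LinearIndepOn ℝ g S},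
      (hull ℝ (Set.range fun i : S => g i) : Set E) := by
    refine subset_antisymm (fun x hx => ?_) (Set.iUnion₂_subset fun S _ =>
      Submodule.span_mono (Set.range_comp_subset_range _ g))
    obtain ⟨lam, hlam, rfl⟩ := mem_hull_range_iff.1 hx
    obtain ⟨μ, hμ, hli, hsum⟩ := exists_linearIndepOn_support g hlam
    refine Set.mem_biUnion hli (mem_hull_range_iff.2 ⟨fun i => μ i, fun i => hμ i, ?_⟩)
    rw [← hsum, ← Fintype.sum_subtype_add_sum_subtype (fun i => μ i ≠ 0),
      Fintype.sum_eq_zero (fun i : {i // ¬μ i ≠ 0} => μ i • g i) fun i => by simp [not_not.1 i.2],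
      add_zero]
    convert rfl
  rw [heq]
  exact (Set.toFinite _).isClosed_biUnion fun S hS => isClosed_hull_range_of_linearIndependent hS

theorem exists_nonneg_sum_eq_of_inner_nonpos [CompleteSpace E] (g : ι → E) {u : E}
    (h : ∀ v, (∀ i, ⟪g i, v⟫ ≤ 0) → ⟪u, v⟫ ≤ 0) :
    ∃ lam : ι → ℝ, 0 ≤ lam ∧ ∑ i, lam i • g i = u := by
  rw [← mem_hull_range_iff]
  by_contra hu
  obtain ⟨y, hy, hyu⟩ := ProperCone.hyperplane_separation'
    (⟨hull ℝ (Set.range g), isClosed_hull_range g⟩ : ProperCone ℝ E) hu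
  have := h (-y) fun i => by
    simpa [inner_neg_right] using hy (g i) (subset_hull (Set.mem_range_self i))
  rw [inner_neg_right] at this
  linarith

theorem exists_nonneg_sub_mem_span_of_inner_nonpos [CompleteSpace E] {κ : Type*} [Fintype κ]
    (a : ι → E) (h : κ → E) {u : E}
    (hu : ∀ v, (∀ i, ⟪a i, v⟫ ≤ 0) → (∀ j, ⟪h j, v⟫ = 0) → ⟪u, v⟫ ≤ 0) :
    ∃ lam : ι → ℝ, 0 ≤ lam ∧ u - ∑ i, lam i • a i ∈ Submodule.span ℝ (Set.range h) := by
  obtain ⟨lam, hlam, rfl⟩ := exists_nonneg_sum_eq_of_inner_nonpos (Sum.elim a (Sum.elim h (-h)))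
    fun v hv => hu v (fun i => hv (.inl i)) fun j => le_antisymm (hv (.inr (.inl j)))
      (by simpa [inner_neg_left] using hv (.inr (.inr j)))
  refine ⟨lam ∘ Sum.inl, fun i => hlam _, ?_⟩
  rw [Fintype.sum_sum_type, Fintype.sum_sum_type]
  simp only [Sum.elim_inl, Sum.elim_inr, Function.comp_apply, Pi.neg_apply, add_sub_cancel_left]
  exact Submodule.add_mem _
    (Submodule.sum_mem _ fun j _ => Submodule.smul_mem _ _ (Submodule.subset_span ⟨j, rfl⟩))
    (Submodule.sum_mem _ fun j _ => Submodule.smul_mem _ _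
      (Submodule.neg_mem _ (Submodule.subset_span ⟨j, rfl⟩)))

end ConicHull

section Theta

variable {m : ℕ} {Y : Set (Evec m)} {B : Evec m →L[ℝ] Evec m}

theorem le_thetaY {u y : Evec m} (hy : y ∈ Y) :
    ((⟪y, u⟫ - 1 / 2 * ⟪y, B y⟫ : ℝ) : EReal) ≤ thetaY Y B u :=
  le_iSup₂ (f := fun y (_ : y ∈ Y) => ((⟪y, u⟫ - 1 / 2 * ⟪y, B y⟫ : ℝ) : EReal)) y hy

theorem thetaY_le {u : Evec m} {r : ℝ} (h : ∀ y ∈ Y, ⟪y, u⟫ - 1 / 2 * ⟪y, B y⟫ ≤ r) :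
    thetaY Y B u ≤ r :=
  iSup₂_le fun y hy => EReal.coe_le_coe_iff.2 (h y hy)

theorem thetaY_apply_le_half_inner (hBsym : ∀ u v : Evec m, ⟪B u, v⟫ = ⟪u, B v⟫)
    (hBpsd : ∀ u : Evec m, 0 ≤ ⟪u, B u⟫) (z : Evec m) :
    thetaY Y B (B z) ≤ ((1 / 2 * ⟪z, B z⟫ : ℝ) : EReal) := by
  refine thetaY_le fun y _ => ?_
  have hexp : ⟪y - z, B (y - z)⟫ = ⟪y, B y⟫ - 2 * ⟪y, B z⟫ + ⟪z, B z⟫ := by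
    rw [map_sub, inner_sub_left, inner_sub_right, inner_sub_right, ← hBsym z y,
      real_inner_comm y (B z)]
    ring
  linarith [hBpsd (y - z)]

theorem exists_thetaY_eq_coe_of_mem_subdiff (hYne : Y.Nonempty)
    (hBsym : ∀ u v : Evec m, ⟪B u, v⟫ = ⟪u, B v⟫) (hBpsd : ∀ u : Evec m, 0 ≤ ⟪u, B u⟫)
    {z lam : Evec m} (hlam : lam ∈ subdiff (thetaY Y B) z) :
    ∃ r : ℝ, thetaY Y B z = r ∧ r ≤ ⟪lam, z⟫ - 1 / 2 * ⟪lam, B lam⟫ := by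
  obtain ⟨y, hy⟩ := hYne
  have hsub := (hlam (B lam)).trans (thetaY_apply_le_half_inner hBsym hBpsd lam)
  have hne_top : thetaY Y B z ≠ ⊤ := by
    intro h
    rw [h, EReal.top_add_coe] at hsub
    exact (EReal.coe_lt_top _).not_ge hsub
  have hne_bot : thetaY Y B z ≠ ⊥ := ne_bot_of_le_ne_bot (EReal.coe_ne_bot _) (le_thetaY hy)
  refine ⟨_, (EReal.coe_toReal hne_top hne_bot).symm, ?_⟩
  rw [← EReal.coe_toReal hne_top hne_bot, ← EReal.coe_add, EReal.coe_le_coe_iff,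
    inner_sub_right] at hsub
  linarith

theorem mem_of_mem_subdiff_thetaY (hYc : IsClosed Y) (hYconv : Convex ℝ Y) {z lam : Evec m}
    {r : ℝ} (hz : thetaY Y B z = r) (hlam : lam ∈ subdiff (thetaY Y B) z) : lam ∈ Y := by
  by_contra hlamY
  obtain ⟨f, s, hfY, hflam⟩ := geometric_hahn_banach_closed_point hYconv hYc hlamY
  set v := (InnerProductSpace.toDual ℝ (Evec m)).symm f
  have hv : ∀ x, ⟪x, v⟫ = f x := fun x => by
    rw [real_inner_comm]; exact InnerProductSpace.toDual_symm_apply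
  have hshift : thetaY Y B (z + v) ≤ ((r + s : ℝ) : EReal) := by
    refine iSup₂_le fun y hy => ?_
    have := le_thetaY (B := B) (u := z) hy
    rw [hz, EReal.coe_le_coe_iff] at this
    rw [EReal.coe_le_coe_iff, inner_add_right, hv]
    linarith [hfY y hy]
  have := (hlam (z + v)).trans hshift
  rw [hz, add_sub_cancel_left, ← EReal.coe_add, EReal.coe_le_coe_iff, hv] at this
  linarith

end Theta

section CriticalCone

variable {m : ℕ} {B : Evec m →L[ℝ] Evec m}

theorem smul_mem_critCone {Y : Set (Evec m)} {z lam u : Evec m} (hu : u ∈ critCone Y B z lam)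
    {s : ℝ} (hs : 0 ≤ s) : s • u ∈ critCone Y B z lam := by
  obtain ⟨⟨zs, a, hzs, ha, hz, hlim⟩, hperp⟩ := hu
  refine ⟨⟨zs, fun k => s * a k, hzs, fun k => mul_nonneg hs (ha k), hz, ?_⟩, ?_⟩
  · simpa [smul_smul] using hlim.const_smul s
  · simp only [Set.mem_ofPred_eq, real_inner_smul_right] at hperp ⊢
    rw [hperp, mul_zero]

theorem inner_nonpos_of_thetaY_ne_top {K : Set (Evec m)} (hK : ∀ u ∈ K, ∀ s : ℝ, 0 ≤ s → s • u ∈ K)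
    {q : Evec m} (hq : thetaY K B q ≠ ⊤) {u : Evec m} (hu : u ∈ K) (hBu : B u = 0) :
    ⟪u, q⟫ ≤ 0 := by
  by_contra! hpos
  set C := (thetaY K B q).toReal
  have hs : 0 ≤ (|C| + 1) / ⟪u, q⟫ := by positivity
  have := (le_thetaY (hK u hu _ hs)).trans (EReal.le_coe_toReal hq)
  rw [EReal.coe_le_coe_iff, map_smul, hBu, smul_zero, inner_zero_right, real_inner_smul_left,
    div_mul_cancel₀ _ hpos.ne'] at this
  linarith [le_abs_self C]

theorem mem_polarCone_add_range_of_thetaY_ne_top {p : ℕ} {b : Fin p → Evec m} {c : Fin p → ℝ}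
    (hBsym : ∀ u v : Evec m, ⟪B u, v⟫ = ⟪u, B v⟫) {z lam q : Evec m}
    (hlam : lam ∈ polyhedron b c) (hq : thetaY (critCone (polyhedron b c) B z lam) B q ≠ ⊤) :
    q ∈ polarCone (critCone (polyhedron b c) B z lam) + Set.range B := by
  classical
  -- Farkas for `K ∩ ker B`: `K` is cut out by the active constraints and by `±d`, and `ker B`
  -- by the vectors `B eⱼ`.
  set K := critCone (polyhedron b c) B z lam
  set d := z - B lam
  let a : Fin p ⊕ Bool → Evec m :=
    Sum.elim (fun i => if ⟪b i, lam⟫ = c i then b i else 0) (fun s => if s then d else -d)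
  have hK : ∀ u, u ∈ K ↔ ∀ α, ⟪a α, u⟫ ≤ 0 := fun u => by
    simp only [K, critCone, bTangentCone_polyhedron hlam, Set.mem_inter_iff, Set.mem_ofPred_eq,
      Sum.forall, Bool.forall_bool, a, d, Sum.elim_inl, Sum.elim_inr, Bool.false_eq_true,
      if_true, if_false, inner_neg_left, neg_nonpos]
    refine and_congr (forall_congr' fun i => ?_)
      ⟨fun h => ⟨h.ge, h.le⟩, fun h => le_antisymm h.2 h.1⟩
    split_ifs with hi <;> simp [hi]
  let e : Fin m → Evec m := fun j => B (EuclideanSpace.single j 1)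
  have hker : ∀ u, (∀ j, ⟪e j, u⟫ = 0) → B u = 0 := fun u hu => by
    ext j
    simpa [e, hBsym, EuclideanSpace.inner_single_left] using hu j
  obtain ⟨μ, hμ, hspan⟩ := exists_nonneg_sub_mem_span_of_inner_nonpos a e fun u hu he => by
    rw [real_inner_comm]
    exact inner_nonpos_of_thetaY_ne_top (fun _ hu _ hs => smul_mem_critCone hu hs) hq
      ((hK u).2 hu) (hker u he)
  have hrange : Submodule.span ℝ (Set.range e) ≤ LinearMap.range (B : Evec m →ₗ[ℝ] Evec m) :=
    Submodule.span_le.2 (Set.range_subset_iff.2 fun j => ⟨_, rfl⟩)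
  refine ⟨∑ α, μ α • a α, fun w hw => ?_, _, hrange hspan, add_sub_cancel _ _⟩
  rw [sum_inner]
  exact Finset.sum_nonpos fun α _ => by
    rw [real_inner_smul_left]; exact mul_nonpos_of_nonneg_of_nonpos (hμ α) ((hK w).1 hw α)

end CriticalCone

section Taylor

open Asymptotics

variable {E : Type*} [NormedAddCommGroup E] [InnerProductSpace ℝ E]

theorem tendsto_div_sq_of_isLittleO {f : E → ℝ} (hf : f =o[𝓝 0] fun h => ‖h‖ ^ 2)
    {t : ℕ → ℝ} {w : ℕ → E} {w₀ : E} (ht : Tendsto t atTop (𝓝 0))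
    (hw : Tendsto w atTop (𝓝 w₀)) :
    Tendsto (fun k => f (t k • w k) / t k ^ 2) atTop (𝓝 0) := by
  have htw : Tendsto (fun k => t k • w k) atTop (𝓝 0) := by
    simpa using ht.smul hw
  have hO : (fun k => ‖t k • w k‖ ^ 2) =O[atTop] fun k => t k ^ 2 := by
    have := (isBigO_refl (fun k => t k ^ 2) atTop).mul ((hw.norm.pow 2).isBigO_one ℝ)
    simpa [norm_smul, mul_pow] using this
  exact ((hf.comp_tendsto htw).trans_isBigO hO).tendsto_div_nhds_zero

variable [CompleteSpace E] {G : E → ℝ} {H : E →L[ℝ] E} {x₀ : E}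

theorem contDiff_gradient {n : WithTop ℕ∞} (hG : ContDiff ℝ (n + 1) G) :
    ContDiff ℝ n (gradient G) :=
  (InnerProductSpace.toDual ℝ E).symm.toContinuousLinearEquiv.contDiff.comp
    (hG.fderiv_right le_rfl)

theorem isLittleO_taylor_gradient (hG : Differentiable ℝ G)
    (hH : HasFDerivAt (gradient G) H x₀) :
    (fun h => G (x₀ + h) - G x₀ - ⟪gradient G x₀, h⟫ - 1 / 2 * ⟪H h, h⟫) =o[𝓝 0]
      fun h => ‖h‖ ^ 2 := by
  refine isLittleO_iff.2 fun ε hε => ?_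
  obtain ⟨δ, hδ, hball⟩ := Metric.eventually_nhds_iff_ball.1
    (isLittleO_iff.1 (hasFDerivAt_iff_isLittleO_nhds_zero.1 hH) hε)
  filter_upwards [Metric.ball_mem_nhds 0 hδ] with h hh
  -- `ψ 1 - ψ 0` is the Taylor remainder, and `ψ'` is controlled by the derivative of `∇G`.
  let ψ : ℝ → ℝ := fun s => G (x₀ + s • h) - s * ⟪gradient G x₀, h⟫ - s ^ 2 / 2 * ⟪H h, h⟫
  have hψ : ∀ s, HasDerivAt ψ ⟪gradient G (x₀ + s • h) - gradient G x₀ - H (s • h), h⟫ s := by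
    intro s
    have hline : HasDerivAt (fun s : ℝ => x₀ + s • h) h s := by
      simpa using ((hasDerivAt_id s).smul_const h).const_add x₀
    have hG' := (hG _).hasFDerivAt.comp_hasDerivAt s hline
    have hq := ((hasDerivAt_pow 2 s).div_const 2).mul_const ⟪H h, h⟫
    refine ((hG'.sub ((hasDerivAt_id s).mul_const ⟪gradient G x₀, h⟫)).sub hq).congr_deriv ?_
    rw [← InnerProductSpace.toDual_symm_apply, ← gradient]
    simp only [inner_sub_left, map_smul, real_inner_smul_left]
    ring
  have hbound : ∀ s ∈ Set.Ico (0 : ℝ) 1,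
      ‖⟪gradient G (x₀ + s • h) - gradient G x₀ - H (s • h), h⟫‖ ≤ ε * ‖h‖ ^ 2 := by
    intro s hs
    have hsh : ‖s • h‖ ≤ ‖h‖ := by
      rw [norm_smul, Real.norm_of_nonneg hs.1]
      exact mul_le_of_le_one_left (norm_nonneg h) hs.2.le
    have := hball (s • h) (mem_ball_zero_iff.2 (hsh.trans_lt (mem_ball_zero_iff.1 hh)))
    calc ‖⟪gradient G (x₀ + s • h) - gradient G x₀ - H (s • h), h⟫‖
        ≤ ‖gradient G (x₀ + s • h) - gradient G x₀ - H (s • h)‖ * ‖h‖ := norm_inner_le_norm _ _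
      _ ≤ ε * ‖s • h‖ * ‖h‖ := by gcongr
      _ ≤ ε * ‖h‖ ^ 2 := by rw [sq, ← mul_assoc]; gcongr
  have := norm_image_sub_le_of_norm_deriv_le_segment_01'
    (fun s _ => (hψ s).hasDerivWithinAt) hbound
  have hrem : ψ 1 - ψ 0 = G (x₀ + h) - G x₀ - ⟪gradient G x₀, h⟫ - 1 / 2 * ⟪H h, h⟫ := by
    simp [ψ]
    ring
  rw [hrem] at this
  simpa using this

theorem tendsto_second_diff_quotient (hG : Differentiable ℝ G)
    (hH : HasFDerivAt (gradient G) H x₀) (hcrit : gradient G x₀ = 0) {t : ℕ → ℝ} {w : ℕ → E}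
    {w₀ : E} (ht : Tendsto t atTop (𝓝 0)) (ht0 : ∀ k, t k ≠ 0) (hw : Tendsto w atTop (𝓝 w₀)) :
    Tendsto (fun k => (G (x₀ + t k • w k) - G x₀) / t k ^ 2) atTop
      (𝓝 (1 / 2 * ⟪H w₀, w₀⟫)) := by
  have hrem := tendsto_div_sq_of_isLittleO (isLittleO_taylor_gradient hG hH) ht hw
  have hquad : Tendsto (fun k => 1 / 2 * ⟪H (w k), w k⟫) atTop (𝓝 (1 / 2 * ⟪H w₀, w₀⟫)) :=
    tendsto_const_nhds.mul (((H.continuous.tendsto w₀).comp hw).inner hw)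
  refine (zero_add (1 / 2 * ⟪H w₀, w₀⟫) ▸ hrem.add hquad).congr fun k => ?_
  have := ht0 k
  simp only [hcrit, inner_zero_left, sub_zero, map_smul, real_inner_smul_left,
    real_inner_smul_right]
  field_simp
  ring

end Taylor

theorem EReal.coe_add_two_mul_nonpos {a : ℝ} {x : EReal} (hx : x ≤ ((-(a / 2) : ℝ) : EReal)) :
    (a : EReal) + 2 * x ≤ 0 := by
  induction x using EReal.rec with
  | bot => simp [EReal.mul_bot_of_pos]
  | coe x =>
    rw [EReal.coe_le_coe_iff] at hx
    rw [show (2 : EReal) * x = ((2 * x : ℝ) : EReal) by norm_cast, ← EReal.coe_add]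
    exact EReal.coe_nonpos.2 (by linarith)
  | top => exact absurd hx (EReal.coe_lt_top _).not_ge

theorem exists_seq_of_not_quadratic_growth {E : Type*} [NormedAddCommGroup E] [NormedSpace ℝ E]
    [FiniteDimensional ℝ E] {f : E → EReal} {x₀ : E}
    (h : ∀ ε > 0, ∀ ℓ > 0, ∃ x ∈ closedBall x₀ ε, f x < f x₀ + ((ℓ * ‖x - x₀‖ ^ 2 : ℝ) : EReal)) :
    ∃ (t δ : ℕ → ℝ) (w : ℕ → E) (w₀ : E), w₀ ≠ 0 ∧ (∀ k, 0 < t k) ∧ Tendsto t atTop (𝓝 0) ∧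
      Tendsto δ atTop (𝓝 0) ∧ Tendsto w atTop (𝓝 w₀) ∧
      ∀ k, f (x₀ + t k • w k) < f x₀ + ((δ k * t k ^ 2 : ℝ) : EReal) := by
  have hr : ∀ k : ℕ, (0 : ℝ) < 1 / (k + 1) := fun k => by positivity
  have hr0 : Tendsto (fun k : ℕ => 1 / ((k : ℝ) + 1)) atTop (𝓝 0) :=
    tendsto_one_div_add_atTop_nhds_zero_nat
  choose x hx hlt using fun k : ℕ => h _ (hr k) _ (hr k)
  have hne : ∀ k, x k ≠ x₀ := fun k hk => by simpa [hk] using hlt k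
  set t := fun k => ‖x k - x₀‖
  have ht : ∀ k, 0 < t k := fun k => norm_pos_iff.2 (sub_ne_zero.2 (hne k))
  have hxw : ∀ k, x₀ + t k • (t k)⁻¹ • (x k - x₀) = x k := fun k => by
    rw [smul_inv_smul₀ (ht k).ne', add_sub_cancel]
  obtain ⟨w₀, hw₀, j, hj, hlim⟩ := (isCompact_sphere (0 : E) 1).tendsto_subseq
    (x := fun k => (t k)⁻¹ • (x k - x₀)) fun k => by
      simp [norm_smul, t, (ht k).ne']
  have htlim : Tendsto t atTop (𝓝 0) :=
    squeeze_zero (fun k => (ht k).le) (fun k => mem_closedBall_iff_norm.1 (hx k)) hr0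
  refine ⟨t ∘ j, fun k => 1 / (j k + 1), fun k => (t (j k))⁻¹ • (x (j k) - x₀), w₀,
    ne_zero_of_mem_sphere one_ne_zero ⟨w₀, hw₀⟩, fun k => ht _, htlim.comp hj.tendsto_atTop,
    hr0.comp hj.tendsto_atTop, hlim, fun k => ?_⟩
  rw [Function.comp_apply, hxw]
  exact hlt (j k)

section ENLP

variable {n m : ℕ} {Y : Set (Evec m)} {B : Evec m →L[ℝ] Evec m} {φ₀ : Evec n → ℝ}
  {Φ : Evec n → Evec m} {xo : Evec n} {lmo : Evec m}

theorem lag_sub_add_lt_of_enlpPhi_lt (hYne : Y.Nonempty)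
    (hBsym : ∀ u v : Evec m, ⟪B u, v⟫ = ⟪u, B v⟫) (hBpsd : ∀ u : Evec m, 0 ≤ ⟪u, B u⟫)
    (hkkt2 : lmo ∈ subdiff (thetaY Y B) (Φ xo)) {t : ℝ} {v : Evec m} (hy : lmo + t • v ∈ Y)
    (hv : ⟪Φ xo - B lmo, v⟫ = 0) {x : Evec n} {r : ℝ}
    (hx : enlpPhi Y B φ₀ Φ x < enlpPhi Y B φ₀ Φ xo + r) :
    Lag B φ₀ Φ x lmo - Lag B φ₀ Φ xo lmo + t * ⟪v, Φ x - Φ xo⟫ - t ^ 2 / 2 * ⟪v, B v⟫ < r := by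
  obtain ⟨θ₀, hθ₀, hθ₀le⟩ := exists_thetaY_eq_coe_of_mem_subdiff hYne hBsym hBpsd hkkt2
  have hlow := (add_le_add (le_refl (φ₀ x : EReal)) (le_thetaY (B := B) (u := Φ x) hy)).trans_lt hx
  rw [enlpPhi, hθ₀, ← EReal.coe_add, ← EReal.coe_add, ← EReal.coe_add,
    EReal.coe_lt_coe_iff] at hlow
  have hBv : ⟪v, B lmo⟫ = ⟪v, Φ xo⟫ := by
    rw [inner_sub_left, real_inner_comm, real_inner_comm v] at hv
    linarith
  have hquad : ⟪lmo + t • v, B (lmo + t • v)⟫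
      = ⟪lmo, B lmo⟫ + 2 * t * ⟪v, B lmo⟫ + t ^ 2 * ⟪v, B v⟫ := by
    rw [map_add, map_smul, inner_add_left, inner_add_right, inner_add_right, real_inner_smul_left,
      real_inner_smul_left, real_inner_smul_right, real_inner_smul_right, ← hBsym lmo v,
      real_inner_comm v (B lmo)]
    ring
  rw [hquad, hBv, inner_add_left, real_inner_smul_left] at hlow
  simp only [Lag, inner_sub_right, real_inner_comm lmo] at hlow hθ₀le ⊢
  linarith

theorem second_order_bound_of_seq (hYne : Y.Nonempty)
    (hBsym : ∀ u v : Evec m, ⟪B u, v⟫ = ⟪u, B v⟫) (hBpsd : ∀ u : Evec m, 0 ≤ ⟪u, B u⟫)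
    (hφ₀ : ContDiff ℝ 2 φ₀) (hΦ : ContDiff ℝ 2 Φ)
    (hkkt1 : gradient (fun x => Lag B φ₀ Φ x lmo) xo = 0)
    (hkkt2 : lmo ∈ subdiff (thetaY Y B) (Φ xo)) {t δ : ℕ → ℝ} {w : ℕ → Evec n} {w₀ : Evec n}
    (ht0 : ∀ k, 0 < t k) (ht : Tendsto t atTop (𝓝 0)) (hδ : Tendsto δ atTop (𝓝 0))
    (hw : Tendsto w atTop (𝓝 w₀))
    (hlt : ∀ k, enlpPhi Y B φ₀ Φ (xo + t k • w k)
      < enlpPhi Y B φ₀ Φ xo + ((δ k * t k ^ 2 : ℝ) : EReal))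
    {v : Evec m} (hfeas : ∀ᶠ s in 𝓝[>] (0 : ℝ), lmo + s • v ∈ Y) (hv : ⟪Φ xo - B lmo, v⟫ = 0) :
    ⟪v, fderiv ℝ Φ xo w₀⟫ - 1 / 2 * ⟪v, B v⟫ ≤ -(1 / 2 * ⟪hessL B φ₀ Φ xo lmo w₀, w₀⟫) := by
  set G := fun x => Lag B φ₀ Φ x lmo
  have hG : ContDiff ℝ 2 G := (hφ₀.add (hΦ.inner ℝ contDiff_const)).sub contDiff_const
  have hH : HasFDerivAt (gradient G) (hessL B φ₀ Φ xo lmo) xo :=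
    ((contDiff_gradient (n := 1) hG).differentiable one_ne_zero xo).hasFDerivAt
  have hΦlim : Tendsto (fun k => (t k)⁻¹ • (Φ (xo + t k • w k) - Φ xo)) atTop
      (𝓝 (fderiv ℝ Φ xo w₀)) :=
    (hΦ.differentiable two_ne_zero xo).hasFDerivAt.hasFDerivWithinAt.lim
      (by simpa using ht.smul hw) (.of_forall fun _ => Set.mem_univ _)
      (hw.congr fun k => (inv_smul_smul₀ (ht0 k).ne' _).symm)
  have hlim := ((tendsto_second_diff_quotient (hG.differentiable two_ne_zero) hH hkkt1 ht
    (fun k => (ht0 k).ne') hw).add (tendsto_const_nhds (x := v) |>.inner hΦlim)).sub_const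
    (1 / 2 * ⟪v, B v⟫)
  have hfeas' : ∀ᶠ k in atTop, lmo + t k • v ∈ Y :=
    (tendsto_nhdsWithin_iff.2 ⟨ht, .of_forall ht0⟩).eventually hfeas
  have hle := le_of_tendsto_of_tendsto hlim hδ <| hfeas'.mono fun k hk => by
    have hlag := lag_sub_add_lt_of_enlpPhi_lt hYne hBsym hBpsd hkkt2 hk hv (hlt k)
    have htk := ht0 k
    have hdiv : ∀ A I b : ℝ, A / t k ^ 2 + (t k)⁻¹ * I - 1 / 2 * b
        = (A + t k * I - t k ^ 2 / 2 * b) / t k ^ 2 := fun A I b => by field_simp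
    dsimp only
    rw [real_inner_smul_right, hdiv, div_le_iff₀ (by positivity)]
    exact hlag.le
  linarith

end ENLP

/-- Quadratic growth and strict local minimality under the second-order sufficient condition. -/
theorem quadratic_growth_of_SOSC {n m : ℕ} (Y : Set (Evec m)) (hYne : Y.Nonempty) (hYpoly : IsPolyhedral Y)
    (B : Evec m →L[ℝ] Evec m) (hBsym : ∀ u v : Evec m, ⟪B u, v⟫ = ⟪u, B v⟫)
    (hBpsd : ∀ u : Evec m, 0 ≤ ⟪u, B u⟫)
    (φ₀ : Evec n → ℝ) (hφ₀ : ContDiff ℝ 2 φ₀)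
    (Φ : Evec n → Evec m) (hΦ : ContDiff ℝ 2 Φ)
    (xo : Evec n) (lmo : Evec m)
    (hkkt1 : gradient (fun x => Lag B φ₀ Φ x lmo) xo = 0)
    (hkkt2 : lmo ∈ subdiff (thetaY Y B) (Φ xo))
    (hsosc : SOSC Y B φ₀ Φ xo lmo) :
    ∃ ε > (0 : ℝ), ∃ ℓ > (0 : ℝ),
      (∀ x ∈ Metric.closedBall xo ε,
        enlpPhi Y B φ₀ Φ xo + ((ℓ * ‖x - xo‖ ^ 2 : ℝ) : EReal) ≤ enlpPhi Y B φ₀ Φ x) ∧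
      ∀ x ∈ Metric.closedBall xo ε, x ≠ xo →
        enlpPhi Y B φ₀ Φ xo < enlpPhi Y B φ₀ Φ x := by
  obtain ⟨p, b, c, hY⟩ := hYpoly
  change Y = polyhedron b c at hY
  subst hY
  obtain ⟨θ₀, hθ₀, -⟩ := exists_thetaY_eq_coe_of_mem_subdiff hYne hBsym hBpsd hkkt2
  have hlmo : lmo ∈ polyhedron b c :=
    mem_of_mem_subdiff_thetaY (isClosed_polyhedron b c) (convex_polyhedron b c) hθ₀ hkkt2
  have hgrowth : ∃ ε > (0 : ℝ), ∃ ℓ > (0 : ℝ), ∀ x ∈ closedBall xo ε,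
      enlpPhi (polyhedron b c) B φ₀ Φ xo + ((ℓ * ‖x - xo‖ ^ 2 : ℝ) : EReal)
        ≤ enlpPhi (polyhedron b c) B φ₀ Φ x := by
    by_contra! hfail
    obtain ⟨t, δ, w, w₀, hw₀, ht0, ht, hδ, hw, hlt⟩ := exists_seq_of_not_quadratic_growth hfail
    have hθK : thetaY (critCone (polyhedron b c) B (Φ xo) lmo) B (fderiv ℝ Φ xo w₀)
        ≤ ((-(⟪hessL B φ₀ Φ xo lmo w₀, w₀⟫ / 2) : ℝ) : EReal) := thetaY_le fun v hv => by
      linarith [second_order_bound_of_seq hYne hBsym hBpsd hφ₀ hΦ hkkt1 hkkt2 ht0 ht hδ hw hlt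
        (eventually_add_smul_mem_of_mem_critCone hlmo hv) hv.2]
    have hmem := mem_polarCone_add_range_of_thetaY_ne_top hBsym hlmo
      (ne_top_of_le_ne_top (EReal.coe_ne_top _) hθK)
    exact (hsosc w₀ hw₀ hmem).not_ge (EReal.coe_add_two_mul_nonpos hθK)
  obtain ⟨ε, hε, ℓ, hℓ, hgrow⟩ := hgrowth
  refine ⟨ε, hε, ℓ, hℓ, hgrow, fun x hx hne => lt_of_lt_of_le ?_ (hgrow x hx)⟩
  rw [enlpPhi, hθ₀, ← EReal.coe_add, ← EReal.coe_add, EReal.coe_lt_coe_iff]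
  have : 0 < ‖x - xo‖ := norm_pos_iff.2 (sub_ne_zero.2 hne)
  exact lt_add_of_pos_right _ (by positivity)
end
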